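/- arXiv:2104.07159 — 2 statements merged into one kernel-verified Lean document; each statement's English description precedes it below -/
import Mathlib

section
/- The map sending a sublattice S of the concept lattice B(K) to the context K_S := (∪{A : (A,B) ∈ S}, ∪{B : (A,B) ∈ S}, ∪{A×B : (A,B) ∈ S}) is a bijection from the set of all sublattices of B(K) onto the set of all closed-subcontexts of K. -/
/-!
A finite sublattice `S` of `B(K)` contains, for every set `A` of objects covered by its extents,
a least element `e` whose extent contains `A`, and for every attribute `n` occurring in its
intents a greatest element `d` whose intent contains `n`. Let `(A, B)` be a concept of `K_S` and
`n ∈ B`. Every `g ∈ A` is incident with `n` in `K_S`, i.e. lies in the extent of some element of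
`S` whose intent contains `n`, hence in `d.1`; so `e.1 ⊆ d.1` and `n ∈ d.2 ⊆ e.2`. Thus `B = e.2`,
`A = e.1` and `(A, B) ∈ S`: the concepts of `K_S` are exactly the elements of `S`. Conversely,
joins and meets of concepts of a closed-subcontext are computed by the same intersections in the
subcontext as in `K`, so its concept set is a sublattice, and the union of its concepts gives back
the subcontext.
-/

variable {G M : Type*} [Fintype G] [Fintype M]

/-- Attribute derivation A' of an object set A w.r.t. incidence I. -/
def fcaExtDeriv (I : Set (G × M)) (A : Set G) : Set M := {m | ∀ g ∈ A, (g, m) ∈ I}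

/-- Object derivation B' of an attribute set B w.r.t. incidence I. -/
def intDeriv (I : Set (G × M)) (B : Set M) : Set G := {g | ∀ m ∈ B, (g, m) ∈ I}

/-- (A,B) is a formal concept of (G,M,I). -/
def IsConcept (I : Set (G × M)) (A : Set G) (B : Set M) : Prop :=
  fcaExtDeriv I A = B ∧ intDeriv I B = A

/-- Derivation of an object set inside the (sub)context (H,N,J). -/
def subExtDeriv (N : Set M) (J : Set (G × M)) (A : Set G) : Set M :=
  {n ∈ N | ∀ g ∈ A, (g, n) ∈ J}

/-- Derivation of an attribute set inside the (sub)context (H,N,J). -/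
def subIntDeriv (H : Set G) (J : Set (G × M)) (B : Set M) : Set G :=
  {h ∈ H | ∀ n ∈ B, (h, n) ∈ J}

/-- (A,B) is a formal concept of the context (H,N,J). -/
def IsSubConcept (H : Set G) (N : Set M) (J : Set (G × M)) (A : Set G) (B : Set M) : Prop :=
  A ⊆ H ∧ B ⊆ N ∧ subExtDeriv N J A = B ∧ subIntDeriv H J B = A

/-- (H,N,J) is a closed-subcontext of (G,M,I). -/
def IsClosedSubcontext (I : Set (G × M)) (H : Set G) (N : Set M) (J : Set (G × M)) : Prop :=
  J ⊆ I ∩ H ×ˢ N ∧ ∀ A B, IsSubConcept H N J A B → IsConcept I A B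

/-- Binary join in the concept lattice of (G,M,I). -/
def conceptJoin (I : Set (G × M)) (c d : Set G × Set M) : Set G × Set M :=
  (intDeriv I (c.2 ∩ d.2), c.2 ∩ d.2)

/-- Binary meet in the concept lattice of (G,M,I). -/
def conceptMeet (I : Set (G × M)) (c d : Set G × Set M) : Set G × Set M :=
  (c.1 ∩ d.1, fcaExtDeriv I (c.1 ∩ d.1))

/-- S is a sublattice of the concept lattice of (G,M,I). -/
def IsConceptSublattice (I : Set (G × M)) (S : Set (Set G × Set M)) : Prop :=
  S.Nonempty ∧ (∀ c ∈ S, IsConcept I c.1 c.2) ∧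
    ∀ c ∈ S, ∀ d ∈ S, conceptJoin I c d ∈ S ∧ conceptMeet I c d ∈ S

/-- Image of the concept set of the subcontext [H,N] under φ₁(A,B)=(A'',A'). -/
def phi1Image (I : Set (G × M)) (H : Set G) (N : Set M) : Set (Set G × Set M) :=
  {c | ∃ A B, IsSubConcept H N (I ∩ H ×ˢ N) A B ∧
      c = (intDeriv I (fcaExtDeriv I A), fcaExtDeriv I A)}

/-- Image of the concept set of the subcontext [H,N] under φ₂(A,B)=(B',B''). -/
def phi2Image (I : Set (G × M)) (H : Set G) (N : Set M) : Set (Set G × Set M) :=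
  {c | ∃ A B, IsSubConcept H N (I ∩ H ×ˢ N) A B ∧
      c = (intDeriv I B, fcaExtDeriv I (intDeriv I B))}

/-- [H,N] is (isomorphic to) a contranominal scale of dimension k in (G,M,I). -/
def IsContranominal (I : Set (G × M)) (k : ℕ) (H : Set G) (N : Set M) : Prop :=
  ∃ f : Fin k → G, ∃ g : Fin k → M, Function.Injective f ∧ Function.Injective g ∧
    H = Set.range f ∧ N = Set.range g ∧ ∀ i j, (f i, g j) ∈ I ↔ i ≠ j

/-- O is a minimal object generator of the concept with extent A. -/
def IsMinObjGen (I : Set (G × M)) (A : Set G) (O : Set G) : Prop :=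
  intDeriv I (fcaExtDeriv I O) = A ∧ ∀ P ⊂ O, intDeriv I (fcaExtDeriv I P) ≠ A

/-- Q is a minimal attribute generator of the concept with intent B. -/
def IsMinAttGen (I : Set (G × M)) (B : Set M) (Q : Set M) : Prop :=
  fcaExtDeriv I (intDeriv I Q) = B ∧ ∀ P ⊂ Q, fcaExtDeriv I (intDeriv I P) ≠ B

/-- Union of all minimal object generators of the atoms of a Boolean suborder
given by an order embedding f of the powerset of Fin k. -/
def genH (I : Set (G × M)) {k : ℕ} (f : Set (Fin k) → Set G × Set M) : Set G :=
  {g | ∃ i : Fin k, ∃ O : Set G, IsMinObjGen I (f {i}).1 O ∧ g ∈ O}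

/-- Union of all minimal attribute generators of the coatoms of a Boolean suborder. -/
def genN (I : Set (G × M)) {k : ℕ} (f : Set (Fin k) → Set G × Set M) : Set M :=
  {m | ∃ i : Fin k, ∃ Q : Set M, IsMinAttGen I (f {i}ᶜ).2 Q ∧ m ∈ Q}

open Set

theorem Set.Finite.exists_forall_le_of_forall_op_mem {α β : Type*} [Preorder β] {T : Set α}
    (hT : T.Finite) (hne : T.Nonempty) (f : α → β) (op : α → α → α)
    (hop : ∀ a ∈ T, ∀ b ∈ T, op a b ∈ T ∧ f (op a b) ≤ f a ∧ f (op a b) ≤ f b) :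
    ∃ a ∈ T, ∀ b ∈ T, f a ≤ f b := by
  obtain ⟨a, ha, hmin⟩ := hT.exists_minimalFor f T hne
  refine ⟨a, ha, fun b hb => ?_⟩
  obtain ⟨hab, hle_a, hle_b⟩ := hop a ha b hb
  exact (hmin hab hle_a).trans hle_b

/-- The context `K_S` of the statement. -/
def unionContext {G M : Type*} (S : Set (Set G × Set M)) : Set G × Set M × Set (G × M) :=
  (⋃ c ∈ S, c.1, ⋃ c ∈ S, c.2, ⋃ c ∈ S, c.1 ×ˢ c.2)

/-- The concept set `B(H, N, J)` of a context given as a triple `(H, N, J)`. -/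
def conceptsOf {G M : Type*} (T : Set G × Set M × Set (G × M)) : Set (Set G × Set M) :=
  {c | IsSubConcept T.1 T.2.1 T.2.2 c.1 c.2}

section Concepts

variable {G M : Type*} {I : Set (G × M)}

theorem fcaExtDeriv_anti {A A' : Set G} (h : A ⊆ A') : fcaExtDeriv I A' ⊆ fcaExtDeriv I A :=
  fun _ hm g hg => hm g (h hg)

theorem intDeriv_anti {B B' : Set M} (h : B ⊆ B') : intDeriv I B' ⊆ intDeriv I B :=
  fun _ hg m hm => hg m (h hm)

theorem IsConcept.intent_subset_of_extent_subset {A C : Set G} {B D : Set M}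
    (hc : IsConcept I A B) (hd : IsConcept I C D) (h : A ⊆ C) : D ⊆ B := by
  rw [← hc.1, ← hd.1]
  exact fcaExtDeriv_anti h

theorem IsConcept.subset_conceptJoin_left {c : Set G × Set M} (hc : IsConcept I c.1 c.2)
    (d : Set G × Set M) : c.1 ⊆ (conceptJoin I c d).1 :=
  hc.2 ▸ intDeriv_anti inter_subset_left

theorem IsConcept.subset_conceptJoin_right {d : Set G × Set M} (hd : IsConcept I d.1 d.2)
    (c : Set G × Set M) : d.1 ⊆ (conceptJoin I c d).1 :=
  hd.2 ▸ intDeriv_anti inter_subset_right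

theorem exists_greatest_extent_of_conceptJoin_mem {T : Set (Set G × Set M)} (hfin : T.Finite)
    (hne : T.Nonempty) (hcon : ∀ c ∈ T, IsConcept I c.1 c.2)
    (hjoin : ∀ c ∈ T, ∀ d ∈ T, conceptJoin I c d ∈ T) : ∃ d ∈ T, ∀ c ∈ T, c.1 ⊆ d.1 :=
  hfin.exists_forall_le_of_forall_op_mem hne (fun c => OrderDual.toDual c.1) (conceptJoin I)
    fun c hc d hd =>
      ⟨hjoin c hc d hd, (hcon c hc).subset_conceptJoin_left d,
        (hcon d hd).subset_conceptJoin_right c⟩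

theorem exists_least_extent_of_conceptMeet_mem {T : Set (Set G × Set M)} (hfin : T.Finite)
    (hne : T.Nonempty) (hmeet : ∀ c ∈ T, ∀ d ∈ T, conceptMeet I c d ∈ T) :
    ∃ e ∈ T, ∀ c ∈ T, e.1 ⊆ c.1 :=
  hfin.exists_forall_le_of_forall_op_mem hne (fun c => c.1) (conceptMeet I)
    fun c hc d hd => ⟨hmeet c hc d hd, inter_subset_left, inter_subset_right⟩

end Concepts

section Subcontext

variable {G M : Type*} {H : Set G} {N : Set M} {J : Set (G × M)} {A : Set G} {B : Set M}

theorem subset_subExtDeriv (hB : B ⊆ N) (hAB : A ×ˢ B ⊆ J) : B ⊆ subExtDeriv N J A :=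
  fun _ hn => ⟨hB hn, fun _ hg => hAB ⟨hg, hn⟩⟩

theorem subset_subIntDeriv (hA : A ⊆ H) (hAB : A ×ˢ B ⊆ J) : A ⊆ subIntDeriv H J B :=
  fun _ hg => ⟨hA hg, fun _ hn => hAB ⟨hg, hn⟩⟩

theorem subExtDeriv_anti {A' : Set G} (h : A ⊆ A') : subExtDeriv N J A' ⊆ subExtDeriv N J A :=
  fun _ hn => ⟨hn.1, fun g hg => hn.2 g (h hg)⟩

theorem subIntDeriv_anti {B' : Set M} (h : B ⊆ B') : subIntDeriv H J B' ⊆ subIntDeriv H J B :=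
  fun _ hg => ⟨hg.1, fun n hn => hg.2 n (h hn)⟩

theorem subExtDeriv_subset_fcaExtDeriv {I : Set (G × M)} (hJ : J ⊆ I) (A : Set G) :
    subExtDeriv N J A ⊆ fcaExtDeriv I A :=
  fun _ hn g hg => hJ (hn.2 g hg)

theorem subIntDeriv_subset_intDeriv {I : Set (G × M)} (hJ : J ⊆ I) (B : Set M) :
    subIntDeriv H J B ⊆ intDeriv I B :=
  fun _ hg n hn => hJ (hg.2 n hn)

theorem subset_subIntDeriv_subExtDeriv (hA : A ⊆ H) : A ⊆ subIntDeriv H J (subExtDeriv N J A) :=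
  subset_subIntDeriv hA fun _ hp => hp.2.2 _ hp.1

theorem subset_subExtDeriv_subIntDeriv (hB : B ⊆ N) : B ⊆ subExtDeriv N J (subIntDeriv H J B) :=
  subset_subExtDeriv hB fun _ hp => hp.1.2 _ hp.2

theorem isSubConcept_subExtDeriv (hA : A ⊆ H) :
    IsSubConcept H N J (subIntDeriv H J (subExtDeriv N J A)) (subExtDeriv N J A) :=
  ⟨fun _ hg => hg.1, fun _ hn => hn.1,
    (subExtDeriv_anti (subset_subIntDeriv_subExtDeriv hA)).antisymm
      (subset_subExtDeriv_subIntDeriv fun _ hn => hn.1), rfl⟩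

theorem isSubConcept_subIntDeriv (hB : B ⊆ N) :
    IsSubConcept H N J (subIntDeriv H J B) (subExtDeriv N J (subIntDeriv H J B)) :=
  ⟨fun _ hg => hg.1, fun _ hn => hn.1, rfl,
    (subIntDeriv_anti (subset_subExtDeriv_subIntDeriv hB)).antisymm
      (subset_subIntDeriv_subExtDeriv fun _ hg => hg.1)⟩

theorem subExtDeriv_union (A₁ A₂ : Set G) :
    subExtDeriv N J (A₁ ∪ A₂) = subExtDeriv N J A₁ ∩ subExtDeriv N J A₂ := by
  ext n
  simp only [subExtDeriv, mem_union, or_imp, forall_and, mem_ofPred_eq, mem_inter_iff]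
  tauto

theorem subIntDeriv_union (B₁ B₂ : Set M) :
    subIntDeriv H J (B₁ ∪ B₂) = subIntDeriv H J B₁ ∩ subIntDeriv H J B₂ := by
  ext g
  simp only [subIntDeriv, mem_union, or_imp, forall_and, mem_ofPred_eq, mem_inter_iff]
  tauto

end Subcontext

section ClosedSubcontext

variable {G M : Type*} {I : Set (G × M)} {H : Set G} {N : Set M} {J : Set (G × M)}

theorem IsClosedSubcontext.conceptJoin_mem (hT : IsClosedSubcontext I H N J)
    {c d : Set G × Set M} (hc : c ∈ conceptsOf (H, N, J)) (hd : d ∈ conceptsOf (H, N, J)) :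
    conceptJoin I c d ∈ conceptsOf (H, N, J) := by
  have hsub := isSubConcept_subExtDeriv (N := N) (J := J) (union_subset hc.1 hd.1)
  rw [subExtDeriv_union, hc.2.2.1, hd.2.2.1] at hsub
  show IsSubConcept H N J (intDeriv I (c.2 ∩ d.2)) (c.2 ∩ d.2)
  rwa [(hT.2 _ _ hsub).2]

theorem IsClosedSubcontext.conceptMeet_mem (hT : IsClosedSubcontext I H N J)
    {c d : Set G × Set M} (hc : c ∈ conceptsOf (H, N, J)) (hd : d ∈ conceptsOf (H, N, J)) :
    conceptMeet I c d ∈ conceptsOf (H, N, J) := by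
  have hsub := isSubConcept_subIntDeriv (H := H) (J := J) (union_subset hc.2.1 hd.2.1)
  rw [subIntDeriv_union, hc.2.2.2, hd.2.2.2] at hsub
  show IsSubConcept H N J (c.1 ∩ d.1) (fcaExtDeriv I (c.1 ∩ d.1))
  rwa [(hT.2 _ _ hsub).1]

theorem top_mem_conceptsOf :
    (subIntDeriv H J (subExtDeriv N J H), subExtDeriv N J H) ∈ conceptsOf (H, N, J) :=
  isSubConcept_subExtDeriv subset_rfl

theorem bot_mem_conceptsOf :
    (subIntDeriv H J N, subExtDeriv N J (subIntDeriv H J N)) ∈ conceptsOf (H, N, J) :=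
  isSubConcept_subIntDeriv subset_rfl

theorem IsClosedSubcontext.isConceptSublattice_conceptsOf (hT : IsClosedSubcontext I H N J) :
    IsConceptSublattice I (conceptsOf (H, N, J)) :=
  ⟨⟨_, top_mem_conceptsOf⟩, fun _ hc => hT.2 _ _ hc,
    fun _ hc _ hd => ⟨hT.conceptJoin_mem hc hd, hT.conceptMeet_mem hc hd⟩⟩

theorem unionContext_conceptsOf (hJ : J ⊆ H ×ˢ N) :
    unionContext (conceptsOf (H, N, J)) = (H, N, J) := by
  have hH : ⋃ c ∈ conceptsOf (H, N, J), c.1 = H :=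
    (iUnion₂_subset fun _ hc => hc.1).antisymm fun _ hg =>
      mem_biUnion top_mem_conceptsOf (subset_subIntDeriv_subExtDeriv subset_rfl hg)
  have hN : ⋃ c ∈ conceptsOf (H, N, J), c.2 = N :=
    (iUnion₂_subset fun _ hc => hc.2.1).antisymm fun _ hn =>
      mem_biUnion bot_mem_conceptsOf (subset_subExtDeriv_subIntDeriv subset_rfl hn)
  have hJ : ⋃ c ∈ conceptsOf (H, N, J), c.1 ×ˢ c.2 = J := by
    refine (iUnion₂_subset fun c hc p hp => ?_).antisymm fun p hp => ?_
    · exact (hc.2.2.1 ▸ hp.2 : p.2 ∈ subExtDeriv N J c.1).2 _ hp.1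
    · have hg : {p.1} ⊆ H := singleton_subset_iff.2 (hJ hp).1
      have hmem : (subIntDeriv H J (subExtDeriv N J {p.1}), subExtDeriv N J {p.1}) ∈
          conceptsOf (H, N, J) := isSubConcept_subExtDeriv hg
      refine mem_biUnion hmem ⟨?_, ?_⟩
      · exact subset_subIntDeriv_subExtDeriv hg rfl
      · exact subset_subExtDeriv (singleton_subset_iff.2 (hJ hp).2) (by simpa using hp) rfl
  rw [unionContext, hH, hN, hJ]

end ClosedSubcontext

section Sublattice

variable {G M : Type*} {I : Set (G × M)} {S : Set (Set G × Set M)}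

theorem biUnion_prod_subset_of_forall_isConcept (hcon : ∀ c ∈ S, IsConcept I c.1 c.2) :
    ⋃ c ∈ S, c.1 ×ˢ c.2 ⊆ I :=
  iUnion₂_subset fun c hc p hp => ((hcon c hc).1 ▸ hp.2 : p.2 ∈ fcaExtDeriv I c.1) _ hp.1

theorem isSubConcept_biUnion_of_mem (hcon : ∀ c ∈ S, IsConcept I c.1 c.2) {c : Set G × Set M}
    (hc : c ∈ S) :
    IsSubConcept (⋃ c ∈ S, c.1) (⋃ c ∈ S, c.2) (⋃ c ∈ S, c.1 ×ˢ c.2) c.1 c.2 := by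
  have hJI := biUnion_prod_subset_of_forall_isConcept hcon
  have hrect : c.1 ×ˢ c.2 ⊆ ⋃ c ∈ S, c.1 ×ˢ c.2 :=
    subset_biUnion_of_mem (u := fun c => c.1 ×ˢ c.2) hc
  refine ⟨subset_biUnion_of_mem (u := fun c => c.1) hc,
    subset_biUnion_of_mem (u := fun c => c.2) hc, ?_, ?_⟩
  · exact ((subExtDeriv_subset_fcaExtDeriv hJI c.1).trans (hcon c hc).1.le).antisymm
      (subset_subExtDeriv (subset_biUnion_of_mem (u := fun c => c.2) hc) hrect)
  · exact ((subIntDeriv_subset_intDeriv hJI c.2).trans (hcon c hc).2.le).antisymm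
      (subset_subIntDeriv (subset_biUnion_of_mem (u := fun c => c.1) hc) hrect)

theorem IsConceptSublattice.mem_intent_of_forall_mem_biUnion (hS : IsConceptSublattice I S)
    (hfin : S.Finite) {A : Set G} {n : M} (hn : n ∈ ⋃ c ∈ S, c.2)
    (hAn : ∀ g ∈ A, (g, n) ∈ ⋃ c ∈ S, c.1 ×ˢ c.2) {e : Set G × Set M} (he : e ∈ S)
    (hleast : ∀ c ∈ S, A ⊆ c.1 → e.1 ⊆ c.1) : n ∈ e.2 := by
  obtain ⟨-, hcon, hclosed⟩ := hS
  obtain ⟨c₀, hc₀, hnc₀⟩ := mem_iUnion₂.1 hn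
  obtain ⟨d, ⟨hdS, hnd⟩, hgreatest⟩ := exists_greatest_extent_of_conceptJoin_mem
    (T := {c ∈ S | n ∈ c.2}) (hfin.subset (sep_subset _ _)) ⟨c₀, hc₀, hnc₀⟩
    (fun c hc => hcon c hc.1) fun c hc d hd => ⟨(hclosed c hc.1 d hd.1).1, hc.2, hd.2⟩
  have hAd : A ⊆ d.1 := fun g hg => by
    obtain ⟨c, hc, hgc, hnc⟩ := mem_iUnion₂.1 (hAn g hg)
    exact hgreatest c ⟨hc, hnc⟩ hgc
  exact (hcon e he).intent_subset_of_extent_subset (hcon d hdS) (hleast d hdS hAd) hnd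

theorem IsConceptSublattice.mem_of_isSubConcept (hS : IsConceptSublattice I S) (hfin : S.Finite)
    {A : Set G} {B : Set M}
    (h : IsSubConcept (⋃ c ∈ S, c.1) (⋃ c ∈ S, c.2) (⋃ c ∈ S, c.1 ×ˢ c.2) A B) :
    (A, B) ∈ S := by
  have hcon := hS.2.1
  have hclosed := hS.2.2
  obtain ⟨hAH, hBN, hAB, hBA⟩ := h
  obtain ⟨t, htS, htop⟩ := exists_greatest_extent_of_conceptJoin_mem hfin hS.1 hcon
    fun c hc d hd => (hclosed c hc d hd).1
  have hAt : A ⊆ t.1 := fun g hg => by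
    obtain ⟨c, hc, hgc⟩ := mem_iUnion₂.1 (hAH hg)
    exact htop c hc hgc
  obtain ⟨e, ⟨heS, hAe⟩, hleast⟩ := exists_least_extent_of_conceptMeet_mem (I := I)
    (T := {c ∈ S | A ⊆ c.1}) (hfin.subset (sep_subset _ _)) ⟨t, htS, hAt⟩
    fun c hc d hd => ⟨(hclosed c hc.1 d hd.1).2, subset_inter hc.2 hd.2⟩
  have he := isSubConcept_biUnion_of_mem hcon heS
  have hBe : B = e.2 := by
    refine Subset.antisymm (fun n hn => ?_) (he.2.2.1 ▸ hAB ▸ subExtDeriv_anti hAe)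
    exact hS.mem_intent_of_forall_mem_biUnion hfin (hBN hn)
      (hAB ▸ hn : n ∈ subExtDeriv _ _ A).2 heS fun c hc hAc => hleast c ⟨hc, hAc⟩
  have hAe : A = e.1 := by rw [← hBA, hBe, he.2.2.2]
  rw [hAe, hBe]
  exact heS

theorem IsConceptSublattice.conceptsOf_unionContext (hS : IsConceptSublattice I S)
    (hfin : S.Finite) :
    conceptsOf (unionContext S) = S :=
  Subset.antisymm (fun _ hc => hS.mem_of_isSubConcept hfin hc)
    fun _ hc => isSubConcept_biUnion_of_mem hS.2.1 hc

theorem IsConceptSublattice.isClosedSubcontext (hS : IsConceptSublattice I S) (hfin : S.Finite) :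
    IsClosedSubcontext I (⋃ c ∈ S, c.1) (⋃ c ∈ S, c.2) (⋃ c ∈ S, c.1 ×ˢ c.2) :=
  ⟨subset_inter (biUnion_prod_subset_of_forall_isConcept hS.2.1)
      (iUnion₂_subset fun _ hc => prod_mono (subset_biUnion_of_mem (u := fun c => c.1) hc)
        (subset_biUnion_of_mem (u := fun c => c.2) hc)),
    fun _ _ h => hS.2.1 _ (hS.mem_of_isSubConcept hfin h)⟩

end Sublattice

theorem stmt2 (I : Set (G × M)) :
    Set.BijOn
      (fun S : Set (Set G × Set M) =>
        ((⋃ c ∈ S, c.1, ⋃ c ∈ S, c.2, ⋃ c ∈ S, c.1 ×ˢ c.2) : Set G × Set M × Set (G × M)))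
      {S | IsConceptSublattice I S}
      {T | IsClosedSubcontext I T.1 T.2.1 T.2.2} :=
  InvOn.bijOn (f' := conceptsOf)
    ⟨fun _ hS => IsConceptSublattice.conceptsOf_unionContext hS (toFinite _),
      fun _ hT => unionContext_conceptsOf fun _ hp => (hT.1 hp).2⟩
    (fun _ hS => IsConceptSublattice.isClosedSubcontext hS (toFinite _))
    fun _ hT => IsClosedSubcontext.isConceptSublattice_conceptsOf hT
end

section
/- Let (A, B) ≤ (C, D) be formal concepts of a finite formal context K = (G, M, I). Then (C, B, I ∩ (C × B)) is a closed-subcontext of K whose concept lattice is exactly the interval [(A,B), (C,D)] in the concept lattice of K. -/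
variable {G M : Type*} [Fintype G] [Fintype M]

/-!
Inside the subcontext `(C, B, I ∩ C × B)` the two derivations are the derivations of `K`
cut down to `B` and to `C`. Since `A = B'` and `C = D'` with `D ⊆ B`, a concept `(E, F)` of the
subcontext satisfies `A ⊆ E ⊆ C` and `D ⊆ F ⊆ B`; antitonicity of derivation then shows that
both cut-downs are vacuous, so `(E, F)` is a concept of `K`. Conversely, a concept of `K` in
the interval already has `F = E' ⊆ A' = B`, and the cut-downs change nothing.
-/

section

variable {α β : Type*} {I : Set (α × β)}

theorem fcaExtDeriv_anti_s8 {A₁ A₂ : Set α} (h : A₁ ⊆ A₂) : fcaExtDeriv I A₂ ⊆ fcaExtDeriv I A₁ :=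
  fun _ hm g hg => hm g (h hg)

theorem intDeriv_anti_s8 {B₁ B₂ : Set β} (h : B₁ ⊆ B₂) : intDeriv I B₂ ⊆ intDeriv I B₁ :=
  fun _ hg m hm => hg m (h hm)

theorem subExtDeriv_inter_prod {H E : Set α} {N : Set β} (hE : E ⊆ H) :
    subExtDeriv N (I ∩ H ×ˢ N) E = N ∩ fcaExtDeriv I E := by
  ext m
  exact ⟨fun ⟨hm, h⟩ => ⟨hm, fun g hg => (h g hg).1⟩,
    fun ⟨hm, h⟩ => ⟨hm, fun g hg => ⟨h g hg, hE hg, hm⟩⟩⟩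

theorem subIntDeriv_inter_prod {H : Set α} {N F : Set β} (hF : F ⊆ N) :
    subIntDeriv H (I ∩ H ×ˢ N) F = H ∩ intDeriv I F := by
  ext g
  exact ⟨fun ⟨hg, h⟩ => ⟨hg, fun m hm => (h m hm).1⟩,
    fun ⟨hg, h⟩ => ⟨hg, fun m hm => ⟨h m hm, hg, hF hm⟩⟩⟩

theorem isSubConcept_inter_prod_iff {H E : Set α} {N F : Set β} :
    IsSubConcept H N (I ∩ H ×ˢ N) E F ↔
      E ⊆ H ∧ F ⊆ N ∧ N ∩ fcaExtDeriv I E = F ∧ H ∩ intDeriv I F = E := by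
  constructor
  · rintro ⟨hE, hF, hext, hint⟩
    rw [subExtDeriv_inter_prod hE] at hext
    rw [subIntDeriv_inter_prod hF] at hint
    exact ⟨hE, hF, hext, hint⟩
  · rintro ⟨hE, hF, hext, hint⟩
    exact ⟨hE, hF, by rwa [subExtDeriv_inter_prod hE], by rwa [subIntDeriv_inter_prod hF]⟩

variable {A C E : Set α} {B D F : Set β}

theorem IsSubConcept.isConcept_of_interval (hAB : IsConcept I A B) (hCD : IsConcept I C D)
    (hAC : A ⊆ C) (h : IsSubConcept C B (I ∩ C ×ˢ B) E F) : IsConcept I E F ∧ A ⊆ E ∧ E ⊆ C := by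
  obtain ⟨hEC, hFB, hext, hint⟩ := isSubConcept_inter_prod_iff.mp h
  have hAE : A ⊆ E := by
    rw [← hint]
    exact Set.subset_inter hAC (by rw [← hAB.2]; exact intDeriv_anti_s8 hFB)
  have hDF : D ⊆ F := by
    have hDB : D ⊆ B := by
      rw [← hCD.1, ← hAB.1]
      exact fcaExtDeriv_anti_s8 hAC
    rw [← hext]
    exact Set.subset_inter hDB (by rw [← hCD.1]; exact fcaExtDeriv_anti_s8 hEC)
  have hF : fcaExtDeriv I E = F := by
    rw [← hext, eq_comm, Set.inter_eq_right, ← hAB.1]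
    exact fcaExtDeriv_anti_s8 hAE
  have hE : intDeriv I F = E := by
    rw [← hint, eq_comm, Set.inter_eq_right, ← hCD.2]
    exact intDeriv_anti_s8 hDF
  exact ⟨⟨hF, hE⟩, hAE, hEC⟩

theorem IsConcept.isSubConcept_of_interval (hAB : fcaExtDeriv I A = B) (h : IsConcept I E F)
    (hAE : A ⊆ E) (hEC : E ⊆ C) : IsSubConcept C B (I ∩ C ×ˢ B) E F := by
  have hFB : F ⊆ B := by
    rw [← h.1, ← hAB]
    exact fcaExtDeriv_anti_s8 hAE
  refine isSubConcept_inter_prod_iff.mpr ⟨hEC, hFB, ?_, ?_⟩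
  · rw [h.1, Set.inter_eq_right.mpr hFB]
  · rw [h.2, Set.inter_eq_right.mpr hEC]

end

theorem stmt8 (I : Set (G × M)) (A C : Set G) (B D : Set M)
    (h1 : IsConcept I A B) (h2 : IsConcept I C D) (hle : A ⊆ C) :
    IsClosedSubcontext I C B (I ∩ C ×ˢ B) ∧
      ∀ E F, IsSubConcept C B (I ∩ C ×ˢ B) E F ↔ IsConcept I E F ∧ A ⊆ E ∧ E ⊆ C := by
  have interval (E : Set G) (F : Set M) :
      IsSubConcept C B (I ∩ C ×ˢ B) E F ↔ IsConcept I E F ∧ A ⊆ E ∧ E ⊆ C :=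
    ⟨fun h => h.isConcept_of_interval h1 h2 hle,
      fun ⟨h, hAE, hEC⟩ => h.isSubConcept_of_interval h1.1 hAE hEC⟩
  exact ⟨⟨subset_rfl, fun E F h => ((interval E F).mp h).1⟩, interval⟩
end
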